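/- arXiv:1511.04876 — 5 statements merged into one kernel-verified Lean document; each statement's English description precedes it below -/
import Mathlib

section
/- Assume Condition (†). Then for every 𝓙 ⊆ 𝓘 with |𝓙| even and ∅ ≠ 𝓙 ≠ 𝓘, and every ε : 𝓘 → {0,1}, the product ∏_{i∈𝓘} (a·D^𝓙_i)^{ε_i} is a square in ℚ if and only if ε is constant; in particular, the classes of the elements a·D^𝓙_i (i ∈ 𝓘) span an 𝔽₂-subspace of ℚ*/(ℚ*)² of dimension |𝓘| − 1, the only nontrivial relation being that ∏_{i∈𝓘} a·D^𝓙_i is a square. -/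
noncomputable section

/-- The ring of `S`-integers of `ℚ` (the archimedean place is implicit). -/
def ZS (S : Finset ℕ) : Set ℚ :=
  {x : ℚ | ∀ p : ℕ, p.Prime → p ∉ S → 0 ≤ padicValRat p x}

/-- Coprimality in `ℤ_S`: generating the unit ideal. -/
def CoprimeZS (S : Finset ℕ) (c d : ℚ) : Prop :=
  ∃ u v : ℚ, u ∈ ZS S ∧ v ∈ ZS S ∧ u * c + v * d = 1

/-- `p_𝓙(t,s) = ∏_{j ∈ 𝓙} (c_j t + d_j s)`. -/
def pJ {I F : Type*} [Field F] (cc dd : I → ℚ) (J : Finset I) (t s : F) : F :=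
  ∏ j ∈ J, ((cc j : F) * t + (dd j : F) * s)

/-- `D^𝓙_i` (for `e = d`) and `D̂^𝓙_i` (for `e = −d`). -/
def Dgen {I : Type*} [Fintype I] [DecidableEq I] (cc dd : I → ℚ) (e : ℚ)
    (J : Finset I) (i : I) : ℚ :=
  if i ∈ J then e * pJ cc dd Jᶜ (dd i) (-(cc i)) else pJ cc dd J (dd i) (-(cc i))

/-- Condition (†): the classes of `−1` and the `Δ_{i,j}` (for `i < j`) are linearly
independent in `ℚ*/(ℚ*)²` modulo the subgroup generated by the classes of `a` and `b`. -/
def CondDagger {I : Type*} [Fintype I] [LinearOrder I] (cc dd : I → ℚ) (a b : ℚ) : Prop :=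
  ∀ (ε₀ : Bool) (ε : I → I → Bool),
    (∃ (δ₁ δ₂ : Bool) (r : ℚ), r ≠ 0 ∧
      (if ε₀ then (-1 : ℚ) else 1) *
        ∏ ij ∈ Finset.univ.filter (fun ij : I × I => ij.1 < ij.2),
          (if ε ij.1 ij.2 then cc ij.2 * dd ij.1 - cc ij.1 * dd ij.2 else 1) =
        (if δ₁ then a else 1) * (if δ₂ then b else 1) * r ^ 2) →
    ε₀ = false ∧ ∀ i j : I, i < j → ε i j = false

/-!
Write `Δ i j = c_j d_i − c_i d_j`, which is antisymmetric. Then `D^𝓙_i` is `d` (if `i ∈ 𝓙`)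
times the product of `Δ i j` over the `j` on the other side of the cut `(𝓙, 𝓘 ∖ 𝓙)`. Pairing
the factors `Δ i j` and `Δ j i`, the product `∏_{ε_i = 1} a·D^𝓙_i` is `± a^m b^k` times a square
times the product of `Δ i j` (`i < j`) over the cut edges whose endpoints have different `ε`.
If it is a square, (†) forces that set of edges to be empty, so `ε` is constant on the complete
bipartite graph between `𝓙` and its complement, which is connected. For `ε ≡ 1` the product is
`a^|𝓘| d^|𝓙| (−1)^(|𝓙|·|𝓘∖𝓙|)` times a square, hence a square as `|𝓘|` and `|𝓙|` are even.
-/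

open Finset

section PairProducts

variable {I R : Type*} [CommRing R]

theorem prod_prod_mul_prod_prod_swap (f : I → I → R) (hf : ∀ i j, f j i = -f i j)
    (s t : Finset I) :
    (∏ i ∈ s, ∏ j ∈ t, f i j) * ∏ i ∈ t, ∏ j ∈ s, f i j =
      (-1) ^ (#s * #t) * (∏ i ∈ s, ∏ j ∈ t, f i j) ^ 2 := by
  rw [prod_comm (s := t), prod_congr rfl fun j _ => prod_congr rfl fun i _ => hf j i]
  simp only [prod_neg, prod_mul_distrib, prod_const, ← pow_mul]
  ring

variable [Fintype I] [LinearOrder I]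

theorem prod_eq_prod_lt_mul_swap {M : Type*} [CommMonoid M] (g : I × I → M)
    (hg : ∀ i, g (i, i) = 1) :
    ∏ p, g p = ∏ p : I × I with p.1 < p.2, g p * g p.swap := by
  rw [prod_mul_distrib, ← prod_filter_mul_prod_filter_not univ (fun p : I × I => p.1 < p.2)]
  congr 1
  have hdiag : ∀ p ∈ univ.filter (fun p : I × I => ¬p.1 < p.2), g p ≠ 1 → p.2 < p.1 := by
    rintro ⟨i, j⟩ hp hne
    simp only [mem_filter, mem_univ, true_and, not_lt] at hp
    exact hp.lt_of_ne fun h => hne (h ▸ hg i)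
  rw [← prod_filter_of_ne hdiag, filter_filter]
  refine prod_nbij' Prod.swap Prod.swap ?_ ?_ (fun _ _ => rfl) (fun _ _ => rfl) fun _ _ => rfl <;>
    · rintro ⟨i, j⟩ h
      simp only [mem_filter, mem_univ, true_and, Prod.swap_prod_mk] at h ⊢
      first | exact h.2 | exact ⟨h.not_gt, h⟩

theorem exists_prod_prod_eq_neg_one_pow_mul_sq_mul (f : I → I → R)
    (hf : ∀ i j, f j i = -f i j) (C : I → I → Prop) [DecidableRel C]
    (hC : ∀ i j, C j i ↔ C i j) (hCirr : ∀ i, ¬C i i) (ε : I → Bool) :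
    ∃ n : ℕ, ∏ i with ε i, ∏ j with C i j, f i j =
      (-1) ^ n *
        (∏ p : I × I with p.1 < p.2, if C p.1 p.2 ∧ ε p.1 ∧ ε p.2 then f p.1 p.2 else 1) ^ 2 *
        ∏ p : I × I with p.1 < p.2, if C p.1 p.2 ∧ ε p.1 ≠ ε p.2 then f p.1 p.2 else 1 := by
  set g : I × I → R := fun p => if ε p.1 ∧ C p.1 p.2 then f p.1 p.2 else 1
  have hpairs : ∏ i with ε i, ∏ j with C i j, f i j = ∏ p, g p := by
    rw [Fintype.prod_prod_type, prod_filter]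
    refine prod_congr rfl fun i _ => ?_
    by_cases hi : ε i <;> simp [g, hi, prod_filter]
  have hswap : ∀ p : I × I, g p * g p.swap =
      (-1) ^ (if C p.1 p.2 ∧ ε p.2 then 1 else 0) *
        (if C p.1 p.2 ∧ ε p.1 ∧ ε p.2 then f p.1 p.2 else 1) ^ 2 *
        (if C p.1 p.2 ∧ ε p.1 ≠ ε p.2 then f p.1 p.2 else 1) := by
    rintro ⟨i, j⟩
    simp only [g, Prod.fst_swap, Prod.snd_swap, hf i j, hC i j]
    by_cases hij : C i j <;> cases ε i <;> cases ε j <;> simp [hij, sq]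
  rw [hpairs, prod_eq_prod_lt_mul_swap g fun i => by simp [g, hCirr i],
    prod_congr rfl fun p _ => hswap p, prod_mul_distrib, prod_mul_distrib, prod_pow_eq_pow_sum,
    prod_pow]
  exact ⟨_, rfl⟩

end PairProducts

theorem pow_eq_ite_mul_sq {M : Type*} [Monoid M] (x : M) (n : ℕ) :
    x ^ n = (if Odd n then x else 1) * (x ^ (n / 2)) ^ 2 := by
  rcases Nat.even_or_odd' n with ⟨k, rfl | rfl⟩
  · simp [← pow_mul, mul_comm]
  · rw [show (2 * k + 1) / 2 = k by omega, if_pos (odd_two_mul_add_one k), pow_succ', ← pow_mul,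
      mul_comm k]

theorem exists_sign_mul_eq_mul_sq_of_sq_eq {K : Type*} [Field K] {a b t r x : K}
    (ha : a ≠ 0) (hb : b ≠ 0) (ht : t ≠ 0) (hr : r ≠ 0) {m k n : ℕ}
    (h : r ^ 2 = a ^ m * b ^ k * (-1) ^ n * t ^ 2 * x) :
    ∃ (ε₀ δ₁ δ₂ : Bool) (s : K), s ≠ 0 ∧
      (if ε₀ then -1 else 1) * x = (if δ₁ then a else 1) * (if δ₂ then b else 1) * s ^ 2 := by
  rw [pow_eq_ite_mul_sq a, pow_eq_ite_mul_sq b, pow_eq_ite_mul_sq (-1 : K) n] at h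
  set A : K := if Odd m then a else 1
  set B : K := if Odd k then b else 1
  have hA : A ≠ 0 := by unfold A; split_ifs <;> simp [ha]
  have hB : B ≠ 0 := by unfold B; split_ifs <;> simp [hb]
  have hu : a ^ (m / 2) * b ^ (k / 2) * (-1 : K) ^ (n / 2) * t ≠ 0 := by simp [ha, hb, ht]
  refine ⟨decide (Odd n), decide (Odd m), decide (Odd k),
    r / (A * B * (a ^ (m / 2) * b ^ (k / 2) * (-1) ^ (n / 2) * t)), by simp [hr, hA, hB, hu], ?_⟩
  simp only [decide_eq_true_eq]
  rw [div_pow, h]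
  field_simp
  ring

section Dgen

variable {I : Type*} (cc dd : I → ℚ)

def Delta (i j : I) : ℚ := cc j * dd i - cc i * dd j

theorem Delta_swap (i j : I) : Delta cc dd j i = -Delta cc dd i j := by
  unfold Delta; ring

/-- The product `∏_{i<j} Δ_{i,j}^{ε_{i,j}}` of Condition (†), with `ε_{i,j} = 1` iff `P i j`. -/
def crossProd [LinearOrder I] [Fintype I] (P : I → I → Prop) [DecidableRel P] : ℚ :=
  ∏ p : I × I with p.1 < p.2, if P p.1 p.2 then Delta cc dd p.1 p.2 else 1

theorem pJ_eq_prod_Delta (J : Finset I) (i : I) :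
    pJ cc dd J (dd i) (-cc i) = ∏ j ∈ J, Delta cc dd i j := by
  refine prod_congr rfl fun j _ => ?_
  simp only [Rat.cast_id, Delta]
  ring

variable [Fintype I] [DecidableEq I]

theorem Dgen_of_mem {e : ℚ} {J : Finset I} {i : I} (hi : i ∈ J) :
    Dgen cc dd e J i = e * ∏ j ∈ Jᶜ, Delta cc dd i j := by
  rw [Dgen, if_pos hi, pJ_eq_prod_Delta]

theorem Dgen_of_notMem {e : ℚ} {J : Finset I} {i : I} (hi : i ∉ J) :
    Dgen cc dd e J i = ∏ j ∈ J, Delta cc dd i j := by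
  rw [Dgen, if_neg hi, pJ_eq_prod_Delta]

theorem mul_Dgen_eq (a b : ℚ) (J : Finset I) (i : I) :
    a * Dgen cc dd (a * b) J i =
      a ^ (if i ∈ J then 2 else 1) * b ^ (if i ∈ J then 1 else 0) *
        ∏ j with (i ∈ J ↔ j ∉ J), Delta cc dd i j := by
  by_cases hi : i ∈ J
  · rw [Dgen_of_mem cc dd hi, if_pos hi, if_pos hi, filter_congr (q := (· ∉ J)) (by simp [hi]),
      filter_notMem_eq_sdiff, ← compl_eq_univ_sdiff]
    ring
  · rw [Dgen_of_notMem cc dd hi, if_neg hi, if_neg hi, filter_congr (q := (· ∈ J)) (by simp [hi]),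
      filter_mem_eq_inter, univ_inter]
    ring

theorem isSquare_prod_mul_Dgen {a b : ℚ} {J : Finset I} (hI : Even (Fintype.card I))
    (hJ : Even #J) : IsSquare (∏ i, a * Dgen cc dd (a * b) J i) := by
  have hsplit : ∏ i, Dgen cc dd (a * b) J i =
      (a * b) ^ #J *
        ((∏ i ∈ J, ∏ j ∈ Jᶜ, Delta cc dd i j) * ∏ i ∈ Jᶜ, ∏ j ∈ J, Delta cc dd i j) := by
    rw [← prod_mul_prod_compl J, prod_congr rfl fun i hi => Dgen_of_mem cc dd hi,
      prod_congr rfl fun i hi => Dgen_of_notMem cc dd (mem_compl.mp hi), prod_mul_distrib,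
      prod_const, mul_assoc]
  rw [prod_mul_distrib, prod_const, card_univ, hsplit,
    prod_prod_mul_prod_prod_swap _ (Delta_swap cc dd), ← mul_assoc, ← mul_assoc]
  exact (((hI.isSquare_pow a).mul (hJ.isSquare_pow _)).mul
    ((hJ.mul_right _).isSquare_pow _)).mul (IsSquare.sq _)

end Dgen

section SquareClasses

variable {I : Type*} [Fintype I] [LinearOrder I] (cc dd : I → ℚ)

theorem crossProd_ne_zero (hΔ : ∀ i j : I, i ≠ j → cc j * dd i - cc i * dd j ≠ 0)
    (P : I → I → Prop) [DecidableRel P] : crossProd cc dd P ≠ 0 :=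
  prod_ne_zero_iff.mpr fun p hp => by
    split_ifs
    · exact hΔ _ _ (mem_filter.mp hp).2.ne
    · exact one_ne_zero

theorem exists_prod_mul_Dgen_eq (a b : ℚ) (J : Finset I) (ε : I → Bool) :
    ∃ m k n : ℕ, ∏ i, (if ε i then a * Dgen cc dd (a * b) J i else 1) =
      a ^ m * b ^ k * (-1) ^ n *
        crossProd cc dd (fun i j => (i ∈ J ↔ j ∉ J) ∧ ε i ∧ ε j) ^ 2 *
        crossProd cc dd (fun i j => (i ∈ J ↔ j ∉ J) ∧ ε i ≠ ε j) := by
  obtain ⟨n, hn⟩ := exists_prod_prod_eq_neg_one_pow_mul_sq_mul (Delta cc dd) (Delta_swap cc dd)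
    (fun i j => (i ∈ J ↔ j ∉ J)) (fun _ _ => by tauto) (fun _ => by tauto) ε
  rw [← prod_filter, prod_congr rfl fun i _ => mul_Dgen_eq cc dd a b J i, prod_mul_distrib,
    prod_mul_distrib, prod_pow_eq_pow_sum, prod_pow_eq_pow_sum, hn, ← mul_assoc, ← mul_assoc]
  exact ⟨_, _, n, rfl⟩

variable {cc dd}

theorem eq_of_isSquare_prod_mul_Dgen (hΔ : ∀ i j : I, i ≠ j → cc j * dd i - cc i * dd j ≠ 0)
    {a b : ℚ} (ha : a ≠ 0) (hb : b ≠ 0) (hdagger : CondDagger cc dd a b) {J : Finset I}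
    {ε : I → Bool} (hsq : IsSquare (∏ i, if ε i then a * Dgen cc dd (a * b) J i else 1))
    {i j : I} (hij : i ∈ J ↔ j ∉ J) : ε i = ε j := by
  obtain ⟨m, k, n, hP⟩ := exists_prod_mul_Dgen_eq cc dd a b J ε
  obtain ⟨r, hr⟩ := hsq
  have hQ := crossProd_ne_zero cc dd hΔ (fun i j => (i ∈ J ↔ j ∉ J) ∧ ε i ∧ ε j)
  have hR := crossProd_ne_zero cc dd hΔ (fun i j => (i ∈ J ↔ j ∉ J) ∧ ε i ≠ ε j)
  have hr0 : r ≠ 0 := by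
    rintro rfl
    rw [mul_zero, eq_comm, hP] at hr
    simp [ha, hb, hQ, hR] at hr
  obtain ⟨ε₀, δ₁, δ₂, s, hs, hsign⟩ :=
    exists_sign_mul_eq_mul_sq_of_sq_eq ha hb hQ hr0 (by rw [sq, ← hr, hP])
  have hcut := (hdagger ε₀ (fun i j => decide ((i ∈ J ↔ j ∉ J) ∧ ε i ≠ ε j))
    ⟨δ₁, δ₂, s, hs, by simpa only [decide_eq_true_eq, crossProd, Delta] using hsign⟩).2
  simp only [decide_eq_false_iff_not, not_and, not_not] at hcut
  rcases lt_trichotomy i j with h | rfl | h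
  · exact hcut i j h hij
  · tauto
  · exact (hcut j i h (by tauto)).symm

end SquareClasses

theorem Finset.eq_of_forall_mem_iff_notMem {α β : Type*} {J : Finset α} {i₀ j₀ : α}
    (hi₀ : i₀ ∈ J) (hj₀ : j₀ ∉ J) {f : α → β} (h : ∀ i j, (i ∈ J ↔ j ∉ J) → f i = f j)
    (i : α) : f i = f j₀ := by
  by_cases hi : i ∈ J
  · exact h i j₀ (iff_of_true hi hj₀)
  · exact (h i₀ i (iff_of_true hi₀ hi)).symm.trans (h i₀ j₀ (iff_of_true hi₀ hj₀))

theorem stmt_7_general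
    {I : Type*} [Fintype I] [LinearOrder I]
    (hIeven : Even (Fintype.card I))
    (cc dd : I → ℚ)
    (hΔ : ∀ i j : I, i ≠ j → cc j * dd i - cc i * dd j ≠ 0)
    (a b : ℚ) (ha0 : a ≠ 0) (hb0 : b ≠ 0)
    (hdagger : CondDagger cc dd a b) :
    ∀ J : Finset I, Even J.card → J ≠ ∅ → J ≠ Finset.univ →
      ∀ ε : I → Bool,
        (IsSquare (∏ i : I, if ε i then a * Dgen cc dd (a * b) J i else 1) ↔
          ((∀ i, ε i = true) ∨ (∀ i, ε i = false))) := by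
  intro J hJeven hJne hJuniv ε
  obtain ⟨i₀, hi₀⟩ := nonempty_iff_ne_empty.mpr hJne
  obtain ⟨j₀, hj₀⟩ := not_forall.mp (mt eq_univ_iff_forall.mpr hJuniv)
  constructor
  · intro hsq
    have hconst := eq_of_forall_mem_iff_notMem hi₀ hj₀ fun i j =>
      eq_of_isSquare_prod_mul_Dgen hΔ ha0 hb0 hdagger hsq
    cases h : ε j₀
    · exact Or.inr fun i => (hconst i).trans h
    · exact Or.inl fun i => (hconst i).trans h
  · rintro (h | h) <;> simp only [h, if_true, Bool.false_eq_true, if_false, prod_const_one]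
    · exact isSquare_prod_mul_Dgen cc dd hIeven hJeven
    · exact IsSquare.one

/-- Lemma 3.8, (1) ⇒ (2): under Condition (†), for every even `𝓙` with `∅ ≠ 𝓙 ≠ 𝓘` the
product `∏_i (a·D^𝓙_i)^{ε_i}` is a square in `ℚ` if and only if `ε` is constant; i.e.
the classes `a·D^𝓙_i` span an `𝔽₂`-space of dimension `|𝓘| − 1` in `ℚ*/(ℚ*)²`, the only
nontrivial relation being that `∏_i a·D^𝓙_i` is a square. -/
theorem stmt_7 (S₀ : Finset ℕ) (hS₀ : ∀ p ∈ S₀, p.Prime)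
    {I : Type*} [Fintype I] [LinearOrder I]
    (hIpos : 0 < Fintype.card I) (hIeven : Even (Fintype.card I))
    (cc dd : I → ℚ) (hcc : ∀ i, cc i ∈ ZS S₀) (hdd : ∀ i, dd i ∈ ZS S₀)
    (hcop : ∀ i, CoprimeZS S₀ (cc i) (dd i))
    (hΔ : ∀ i j : I, i ≠ j → cc j * dd i - cc i * dd j ≠ 0)
    (a b : ℚ) (ha : a ∈ ZS S₀) (hb : b ∈ ZS S₀) (ha0 : a ≠ 0) (hb0 : b ≠ 0)
    (hdagger : CondDagger cc dd a b) :
    ∀ J : Finset I, Even J.card → J ≠ ∅ → J ≠ Finset.univ →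
      ∀ ε : I → Bool,
        (IsSquare (∏ i : I, if ε i then a * Dgen cc dd (a * b) J i else 1) ↔
          ((∀ i, ε i = true) ∨ (∀ i, ε i = false))) :=
  stmt_7_general hIeven cc dd hΔ a b ha0 hb0 hdagger
end
end

section
/- Let p ∉ S_0 be an odd prime such that the p-adic valuation of d is 0 and the p-adic valuation of Δ_{i,j} is 0 for all i ≠ j. Let i ∈ 𝓘 and let t, s ∈ ℤ_p, not both in p·ℤ_p, with val_p(p_i(t,s)) > 0. Then there exist x, y ∈ ℤ_p with a·p_𝓐(t,s)·x² + b·p_𝓑(t,s)·y² = 1 if and only if a·D^𝓐_i is a square in ℚ_p. -/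
/-!
Since `(c_i, d_i)` and `(t, s)` are primitive and `p ∣ p_i(t, s)`, we have
`(t, s) ≡ λ (d_i, -c_i) (mod p)` for a unit `λ`, hence `p_j(t, s) ≡ λ Δ_{i,j}` is a unit for
`j ≠ i`. If `i ∈ 𝓐`, the term `a p_𝓐(t, s) x²` lies in `p ℤ_p`, so by Hensel's lemma (`p` odd)
the equation has an integral point iff the unit `b p_𝓑(t, s)` is a square. This unit is
congruent to `λ^|𝓑| b p_𝓑(d_i, -c_i)` with `|𝓑|` even, so it has the square class of
`a D^𝓐_i = a² b p_𝓑(d_i, -c_i)`. The case `i ∈ 𝓑` is symmetric.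
-/

noncomputable section

/-- The field `ℚ_p`, with the primality assumption as an explicit argument. -/
def Qp (p : ℕ) (hp : p.Prime) : Type := @Padic p ⟨hp⟩

noncomputable instance (p : ℕ) (hp : p.Prime) : NormedField (Qp p hp) :=
  letI : Fact p.Prime := ⟨hp⟩
  inferInstanceAs (NormedField ℚ_[p])

/-- The equation `E : a·p_𝓐(t,s)·x² + b·p_𝓑(t,s)·y² = 1` (with `𝓑 = 𝓐ᶜ`). -/
def EqnE {I : Type*} [Fintype I] [DecidableEq I] {F : Type*} [Field F]
    (cc dd : I → ℚ) (A : Finset I) (a b : ℚ) (t s x y : F) : Prop :=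
  (a : F) * pJ cc dd A t s * x ^ 2 + (b : F) * pJ cc dd Aᶜ t s * y ^ 2 = 1

open Finset IsUltrametricDist

theorem pJ_ratCast {I F : Type*} [Field F] [CharZero F] (cc dd : I → ℚ) (J : Finset I)
    (x y : ℚ) : ((pJ cc dd J x y : ℚ) : F) = pJ cc dd J (x : F) (y : F) := by
  simp [pJ]

theorem exists_integral_eqnE_compl_iff {F : Type*} [NormedField F] {I : Type*} [Fintype I]
    [DecidableEq I] (cc dd : I → ℚ) (A : Finset I) (a b : ℚ) (t s : F) :
    (∃ x y : F, ‖x‖ ≤ 1 ∧ ‖y‖ ≤ 1 ∧ EqnE cc dd Aᶜ b a t s x y) ↔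
      ∃ x y : F, ‖x‖ ≤ 1 ∧ ‖y‖ ≤ 1 ∧ EqnE cc dd A a b t s x y := by
  have hswap : ∀ x y : F, EqnE cc dd Aᶜ b a t s y x ↔ EqnE cc dd A a b t s x y := by
    simp only [EqnE, compl_compl, add_comm, implies_true]
  exact ⟨fun ⟨y, x, hy, hx, h⟩ => ⟨x, y, hx, hy, (hswap x y).1 h⟩,
    fun ⟨x, y, hx, hy, h⟩ => ⟨y, x, hy, hx, (hswap x y).2 h⟩⟩

theorem isSquare_sq_mul_iff {α : Type*} [CommGroupWithZero α] {r : α} (hr : r ≠ 0) (x : α) :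
    IsSquare (r ^ 2 * x) ↔ IsSquare x := by
  refine ⟨fun h => ?_, (IsSquare.sq r).mul⟩
  simpa [hr] using h.div (IsSquare.sq r)

theorem norm_mul_lt_one {R : Type*} [SeminormedRing R] {x y : R} (hx : ‖x‖ ≤ 1) (hy : ‖y‖ < 1) :
    ‖x * y‖ < 1 :=
  (norm_mul_le x y).trans_lt (mul_lt_one_of_nonneg_of_lt_one_right hx (norm_nonneg y) hy)

theorem norm_pJ_eq_one_of_notMem {K : Type*} [NormedField K] {I : Type*} {cc dd : I → ℚ} {i : I}
    (hΔ : ∀ j ≠ i, ‖(cc j : K) * dd i - cc i * dd j‖ = 1) {J : Finset I} (hi : i ∉ J) :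
    ‖pJ cc dd J (dd i : K) (-(cc i : K))‖ = 1 := by
  rw [pJ, norm_prod]
  refine prod_eq_one fun j hj => ?_
  rw [← hΔ j (ne_of_mem_of_not_mem hj hi)]
  congr 1
  ring

section Ultrametric

variable {K : Type*} [NormedField K] [IsUltrametricDist K]

theorem norm_eq_of_norm_sub_lt {x y : K} (h : ‖x - y‖ < ‖y‖) : ‖x‖ = ‖y‖ := by
  have := norm_add_eq_max_of_norm_ne_norm h.ne
  rwa [sub_add_cancel, max_eq_right h.le] at this

theorem norm_add_lt_one {x y : K} (hx : ‖x‖ < 1) (hy : ‖y‖ < 1) : ‖x + y‖ < 1 :=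
  (norm_add_le_max x y).trans_lt (max_lt hx hy)

theorem norm_mul_add_mul_le_one {c d t s : K} (hc : ‖c‖ ≤ 1) (hd : ‖d‖ ≤ 1) (ht : ‖t‖ ≤ 1)
    (hs : ‖s‖ ≤ 1) : ‖c * t + d * s‖ ≤ 1 := by
  refine (norm_add_le_max _ _).trans (max_le ?_ ?_) <;> rw [norm_mul]
  exacts [mul_le_one₀ hc (norm_nonneg t) ht, mul_le_one₀ hd (norm_nonneg s) hs]

theorem norm_prod_sub_prod_lt_one {ι : Type*} (J : Finset ι) {u v : ι → K}
    (hu : ∀ j ∈ J, ‖u j‖ ≤ 1) (hv : ∀ j ∈ J, ‖v j‖ ≤ 1) (huv : ∀ j ∈ J, ‖u j - v j‖ < 1) :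
    ‖∏ j ∈ J, u j - ∏ j ∈ J, v j‖ < 1 := by
  classical
  induction J using Finset.induction_on with
  | empty => simp
  | insert c J hc ih =>
    simp only [forall_mem_insert] at hu hv huv
    rw [prod_insert hc, prod_insert hc,
      show ∀ x X y Y : K, x * X - y * Y = x * (X - Y) + (x - y) * Y by intros; ring]
    have hvJ : ‖∏ j ∈ J, v j‖ ≤ 1 := by
      rw [norm_prod]; exact prod_le_one (fun _ _ => norm_nonneg _) hv.2
    refine norm_add_lt_one (norm_mul_lt_one hu.1 (ih hu.2 hv.2 huv.2)) ?_
    rw [mul_comm]; exact norm_mul_lt_one hvJ huv.1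

theorem exists_norm_eq_one_approx_of_norm_eq_one_right {c d t s : K} (hc : ‖c‖ ≤ 1)
    (hd : ‖d‖ = 1) (ht : ‖t‖ ≤ 1) (hts : ‖t‖ = 1 ∨ ‖s‖ = 1) (h : ‖c * t + d * s‖ < 1) :
    ∃ l : K, ‖l‖ = 1 ∧ ‖t - l * d‖ < 1 ∧ ‖s + l * c‖ < 1 := by
  have hd0 : d ≠ 0 := norm_ne_zero_iff.mp (by rw [hd]; exact one_ne_zero)
  have ht1 : ‖t‖ = 1 := by
    refine hts.elim id fun hs1 => ?_
    by_contra ht1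
    have hct : ‖c * t‖ < 1 := norm_mul_lt_one hc (lt_of_le_of_ne ht ht1)
    have hds : ‖d * s‖ = 1 := by rw [norm_mul, hd, hs1, one_mul]
    rw [norm_add_eq_max_of_norm_ne_norm (hct.trans_eq hds.symm).ne, hds, max_eq_right hct.le] at h
    exact h.false
  refine ⟨t / d, by rw [norm_div, ht1, hd, div_one], by simp [hd0], ?_⟩
  rwa [show s + t / d * c = (c * t + d * s) / d by field_simp; ring, norm_div, hd, div_one]

/-- Modulo the maximal ideal, a primitive zero `(t, s)` of the primitive form `c t + d s` is a
unit multiple of `(d, -c)`. -/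
theorem exists_norm_eq_one_approx {c d t s : K} (hc : ‖c‖ ≤ 1) (hd : ‖d‖ ≤ 1)
    (hcd : ‖c‖ = 1 ∨ ‖d‖ = 1) (ht : ‖t‖ ≤ 1) (hs : ‖s‖ ≤ 1) (hts : ‖t‖ = 1 ∨ ‖s‖ = 1)
    (h : ‖c * t + d * s‖ < 1) :
    ∃ l : K, ‖l‖ = 1 ∧ ‖t - l * d‖ < 1 ∧ ‖s + l * c‖ < 1 := by
  rcases hcd with hc1 | hd1
  · obtain ⟨l, hl, hs', ht'⟩ := exists_norm_eq_one_approx_of_norm_eq_one_right hd hc1 hs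
      hts.symm (by rwa [add_comm])
    exact ⟨-l, by rwa [norm_neg], by rwa [neg_mul, sub_neg_eq_add],
      by rwa [neg_mul, ← sub_eq_add_neg]⟩
  · exact exists_norm_eq_one_approx_of_norm_eq_one_right hc hd1 ht hts h

variable {I : Type*} {cc dd : I → ℚ}

section Integral

variable (hcc : ∀ j, ‖(cc j : K)‖ ≤ 1) (hdd : ∀ j, ‖(dd j : K)‖ ≤ 1) {t s : K} (ht : ‖t‖ ≤ 1)
  (hs : ‖s‖ ≤ 1)
include hcc hdd ht hs

theorem norm_pJ_le_one (J : Finset I) : ‖pJ cc dd J t s‖ ≤ 1 := by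
  rw [pJ, norm_prod]
  exact prod_le_one (fun _ _ => norm_nonneg _)
    fun j _ => norm_mul_add_mul_le_one (hcc j) (hdd j) ht hs

theorem norm_pJ_lt_one_of_mem {i : I}
    (hval : ‖(cc i : K) * t + (dd i : K) * s‖ < 1) {J : Finset I} (hi : i ∈ J) :
    ‖pJ cc dd J t s‖ < 1 := by
  classical
  rw [pJ, ← mul_prod_erase J _ hi, norm_mul]
  exact mul_lt_one_of_nonneg_of_lt_one_left (norm_nonneg _) hval
    (by simpa only [pJ] using norm_pJ_le_one hcc hdd ht hs (J.erase i))

variable {l : K} {i : I} (hl : ‖l‖ = 1) (htl : ‖t - l * dd i‖ < 1)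
  (hsl : ‖s + l * cc i‖ < 1)
include hl htl hsl

theorem norm_pJ_sub_pow_mul_lt_one (J : Finset I) :
    ‖pJ cc dd J t s - l ^ #J * pJ cc dd J (dd i : K) (-(cc i : K))‖ < 1 := by
  rw [pJ, pJ, ← prod_const, ← prod_mul_distrib]
  refine norm_prod_sub_prod_lt_one J (fun j _ => norm_mul_add_mul_le_one (hcc j) (hdd j) ht hs)
    (fun j _ => ?_) (fun j _ => ?_)
  · rw [norm_mul, hl, one_mul]
    exact norm_mul_add_mul_le_one (hcc j) (hdd j) (hdd i) (by rw [norm_neg]; exact hcc i)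
  · rw [show (cc j : K) * t + dd j * s - l * (cc j * dd i + dd j * -cc i)
      = cc j * (t - l * dd i) + dd j * (s + l * cc i) by ring]
    exact norm_add_lt_one (norm_mul_lt_one (hcc j) htl) (norm_mul_lt_one (hdd j) hsl)

theorem norm_pJ_eq_one (hΔ : ∀ j ≠ i, ‖(cc j : K) * dd i - cc i * dd j‖ = 1) {J : Finset I}
    (hi : i ∉ J) : ‖pJ cc dd J t s‖ = 1 := by
  have hv : ‖l ^ #J * pJ cc dd J (dd i : K) (-(cc i : K))‖ = 1 := by
    rw [norm_mul, norm_pow, hl, one_pow, one_mul, norm_pJ_eq_one_of_notMem hΔ hi]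
  exact (norm_eq_of_norm_sub_lt
    ((norm_pJ_sub_pow_mul_lt_one hcc hdd ht hs hl htl hsl J).trans_eq hv.symm)).trans hv

end Integral

end Ultrametric

section Padic

variable {p : ℕ} [Fact p.Prime]

theorem Padic.norm_ratCast_le_one {q : ℚ} (h : 0 ≤ padicValRat p q) : ‖(q : ℚ_[p])‖ ≤ 1 :=
  (Padic.norm_le_one_iff_val_nonneg _).2 (by rwa [Padic.valuation_ratCast])

theorem Padic.norm_ratCast_eq_one {q : ℚ} (hq : q ≠ 0) (h : padicValRat p q = 0) :
    ‖(q : ℚ_[p])‖ = 1 := by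
  rw [Padic.norm_eq_zpow_neg_valuation (by exact_mod_cast hq), Padic.valuation_ratCast, h]
  simp

theorem Padic.norm_ratCast_le_one_of_mem_ZS {S : Finset ℕ} {q : ℚ}
    (hq : q ∈ ZS S) (hpS : p ∉ S) : ‖(q : ℚ_[p])‖ ≤ 1 :=
  Padic.norm_ratCast_le_one (hq p Fact.out hpS)

theorem CoprimeZS.norm_eq_one_or {S : Finset ℕ} {c d : ℚ}
    (h : CoprimeZS S c d) (hpS : p ∉ S) (hc : c ∈ ZS S) (hd : d ∈ ZS S) :
    ‖(c : ℚ_[p])‖ = 1 ∨ ‖(d : ℚ_[p])‖ = 1 := by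
  obtain ⟨u, v, hu, hv, huv⟩ := h
  by_contra! hne
  have hlt : ‖((u * c + v * d : ℚ) : ℚ_[p])‖ < 1 := by
    push_cast
    exact norm_add_lt_one
      (norm_mul_lt_one (Padic.norm_ratCast_le_one_of_mem_ZS hu hpS)
        ((Padic.norm_ratCast_le_one_of_mem_ZS hc hpS).lt_of_ne hne.1))
      (norm_mul_lt_one (Padic.norm_ratCast_le_one_of_mem_ZS hv hpS)
        ((Padic.norm_ratCast_le_one_of_mem_ZS hd hpS).lt_of_ne hne.2))
  rw [huv, Rat.cast_one, norm_one] at hlt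
  exact hlt.false

theorem Padic.isSquare_of_norm_sub_one_lt_one (hp : p ≠ 2) {w : ℚ_[p]} (h : ‖w - 1‖ < 1) :
    IsSquare w := by
  have hw : ‖w‖ ≤ 1 := (norm_eq_of_norm_sub_lt (by rwa [norm_one])).trans norm_one |>.le
  let w' : ℤ_[p] := ⟨w, hw⟩
  have h2 : ‖(2 : ℤ_[p])‖ = 1 := by
    exact_mod_cast PadicInt.norm_natCast_eq_one_iff.2
      ((Nat.coprime_primes Fact.out Nat.prime_two).2 hp)
  -- Hensel's lemma for `X² - w` at the approximate root `1`, where the derivative `2` is a unit.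
  obtain ⟨z, hz, -⟩ := hensels_lemma (p := p) (F := Polynomial.X ^ 2 - Polynomial.C w') (a := 1)
    (by simp [one_add_one_eq_two, h2]; rwa [norm_sub_rev] at h)
  simp only [map_sub, map_pow, Polynomial.aeval_X, Polynomial.aeval_C, Algebra.algebraMap_self,
    RingHom.id_apply, sub_eq_zero] at hz
  exact ⟨z, by simpa [sq] using congrArg ((↑) : ℤ_[p] → ℚ_[p]) hz.symm⟩

theorem Padic.isSquare_iff_of_norm_sub_lt_one (hp : p ≠ 2) {u v : ℚ_[p]} (hu : ‖u‖ = 1)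
    (h : ‖u - v‖ < 1) : IsSquare u ↔ IsSquare v := by
  have hv : ‖v‖ = 1 := (norm_eq_of_norm_sub_lt (by rwa [norm_sub_rev, hu])).trans hu
  have hv0 : v ≠ 0 := norm_ne_zero_iff.mp (by rw [hv]; exact one_ne_zero)
  obtain ⟨r, hr⟩ := Padic.isSquare_of_norm_sub_one_lt_one hp (w := u / v) (by
    rwa [show u / v - 1 = (u - v) / v by field_simp, norm_div, hv, div_one])
  have hr0 : r ≠ 0 := by
    rintro rfl
    simp [show u = 0 by simpa [hv0] using hr] at hu
  rw [show u = r ^ 2 * v by rw [sq, ← hr]; field_simp, isSquare_sq_mul_iff hr0]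

theorem Padic.exists_integral_mul_sq_add_mul_sq_eq_one_iff (hp : p ≠ 2) {α β : ℚ_[p]}
    (hα : ‖α‖ < 1) (hβ : ‖β‖ = 1) :
    (∃ x y : ℚ_[p], ‖x‖ ≤ 1 ∧ ‖y‖ ≤ 1 ∧ α * x ^ 2 + β * y ^ 2 = 1) ↔ IsSquare β := by
  constructor
  · rintro ⟨x, y, hx, -, hxy⟩
    have hsmall : ‖α * x ^ 2‖ < 1 := by
      rw [mul_comm]
      exact norm_mul_lt_one (by rw [norm_pow]; exact pow_le_one₀ (norm_nonneg x) hx) hα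
    obtain ⟨r, hr⟩ := Padic.isSquare_of_norm_sub_one_lt_one hp (w := β * y ^ 2)
      (by rwa [show β * y ^ 2 - 1 = -(α * x ^ 2) by linear_combination hxy, norm_neg])
    have hy0 : y ≠ 0 := by
      rintro rfl
      rw [show α * x ^ 2 = 1 by simpa using hxy, norm_one] at hsmall
      exact hsmall.false
    exact ⟨r / y, by field_simp; linear_combination hr⟩
  · rintro ⟨r, rfl⟩
    have hr : ‖r‖ = 1 := by
      rw [norm_mul, ← sq] at hβ
      exact (pow_eq_one_iff_of_nonneg (norm_nonneg r) two_ne_zero).mp hβ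
    have hr0 : r ≠ 0 := norm_ne_zero_iff.mp (by rw [hr]; exact one_ne_zero)
    exact ⟨0, r⁻¹, by simp, by rw [norm_inv, hr, inv_one], by field_simp; ring⟩

variable {I : Type*} {cc dd : I → ℚ}
  (hcc : ∀ j, ‖(cc j : ℚ_[p])‖ ≤ 1) (hdd : ∀ j, ‖(dd j : ℚ_[p])‖ ≤ 1)
  {t s l : ℚ_[p]} (ht : ‖t‖ ≤ 1) (hs : ‖s‖ ≤ 1) {i : I} (hl : ‖l‖ = 1) (htl : ‖t - l * dd i‖ < 1)
  (hsl : ‖s + l * cc i‖ < 1) (hΔ : ∀ j ≠ i, ‖(cc j : ℚ_[p]) * dd i - cc i * dd j‖ = 1)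
include hcc hdd ht hs hl htl hsl hΔ

/-- Modulo the maximal ideal the two sides differ by the square `l ^ #J`. -/
theorem Padic.isSquare_mul_pJ_iff (hp : p ≠ 2) {J : Finset I} (hi : i ∉ J) (hJ : Even #J)
    {w : ℚ_[p]} (hw : ‖w‖ = 1) :
    IsSquare (w * pJ cc dd J t s) ↔ IsSquare (w * pJ cc dd J (dd i : ℚ_[p]) (-(cc i))) := by
  have hl0 : l ≠ 0 := norm_ne_zero_iff.mp (by rw [hl]; exact one_ne_zero)
  have hnorm : ‖w * pJ cc dd J t s‖ = 1 := by
    rw [norm_mul, hw, norm_pJ_eq_one hcc hdd ht hs hl htl hsl hΔ hi, one_mul]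
  have hclose : ‖w * pJ cc dd J t s - w * (l ^ #J * pJ cc dd J (dd i : ℚ_[p]) (-(cc i)))‖ < 1 := by
    rw [← mul_sub, norm_mul, hw, one_mul]
    exact norm_pJ_sub_pow_mul_lt_one hcc hdd ht hs hl htl hsl J
  obtain ⟨k, hk⟩ := hJ
  rw [Padic.isSquare_iff_of_norm_sub_lt_one hp hnorm hclose,
    show w * (l ^ #J * pJ cc dd J (dd i : ℚ_[p]) (-(cc i)))
      = (l ^ k) ^ 2 * (w * pJ cc dd J (dd i : ℚ_[p]) (-(cc i))) by rw [hk]; ring,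
    isSquare_sq_mul_iff (pow_ne_zero k hl0)]

variable [Fintype I] [DecidableEq I]

theorem Padic.exists_integral_eqnE_iff_of_mem (hp : p ≠ 2) {a b : ℚ} (ha : ‖(a : ℚ_[p])‖ ≤ 1)
    (hb : ‖(b : ℚ_[p])‖ = 1) {A : Finset I} (hval : ‖(cc i : ℚ_[p]) * t + dd i * s‖ < 1)
    (hi : i ∈ A) (hB : Even #Aᶜ) :
    (∃ x y : ℚ_[p], ‖x‖ ≤ 1 ∧ ‖y‖ ≤ 1 ∧ EqnE cc dd A a b t s x y) ↔
      IsSquare ((b : ℚ_[p]) * pJ cc dd Aᶜ (dd i : ℚ_[p]) (-(cc i))) := by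
  have hiB : i ∉ Aᶜ := by simpa using hi
  have hβ : ‖(b : ℚ_[p]) * pJ cc dd Aᶜ t s‖ = 1 := by
    rw [norm_mul, hb, norm_pJ_eq_one hcc hdd ht hs hl htl hsl hΔ hiB, one_mul]
  have hα : ‖(a : ℚ_[p]) * pJ cc dd A t s‖ < 1 :=
    norm_mul_lt_one ha (norm_pJ_lt_one_of_mem hcc hdd ht hs hval hi)
  rw [← Padic.isSquare_mul_pJ_iff hcc hdd ht hs hl htl hsl hΔ hp hiB hB hb,
    ← Padic.exists_integral_mul_sq_add_mul_sq_eq_one_iff hp hα hβ]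
  simp only [EqnE, mul_assoc]

end Padic

theorem Padic.exists_integral_eqnE_iff {p : ℕ} [Fact p.Prime] (hp : p ≠ 2) {I : Type*}
    [Fintype I] [DecidableEq I] {cc dd : I → ℚ} (hcc : ∀ j, ‖(cc j : ℚ_[p])‖ ≤ 1)
    (hdd : ∀ j, ‖(dd j : ℚ_[p])‖ ≤ 1) {i : I} (hcd : ‖(cc i : ℚ_[p])‖ = 1 ∨ ‖(dd i : ℚ_[p])‖ = 1)
    (hΔ : ∀ j ≠ i, ‖(cc j : ℚ_[p]) * dd i - cc i * dd j‖ = 1) {a b : ℚ}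
    (ha : ‖(a : ℚ_[p])‖ = 1) (hb : ‖(b : ℚ_[p])‖ = 1) {A : Finset I} (hA : Even #A)
    (hB : Even #Aᶜ) {t s : ℚ_[p]} (ht : ‖t‖ ≤ 1) (hs : ‖s‖ ≤ 1) (hts : ‖t‖ = 1 ∨ ‖s‖ = 1)
    (hval : ‖(cc i : ℚ_[p]) * t + dd i * s‖ < 1) :
    (∃ x y : ℚ_[p], ‖x‖ ≤ 1 ∧ ‖y‖ ≤ 1 ∧ EqnE cc dd A a b t s x y) ↔
      IsSquare ((a * Dgen cc dd (a * b) A i : ℚ) : ℚ_[p]) := by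
  obtain ⟨l, hl, htl, hsl⟩ := exists_norm_eq_one_approx (hcc i) (hdd i) hcd ht hs hts hval
  rw [Dgen]
  split_ifs with hi
  · have ha0 : (a : ℚ_[p]) ≠ 0 := norm_ne_zero_iff.mp (by rw [ha]; exact one_ne_zero)
    rw [Padic.exists_integral_eqnE_iff_of_mem hcc hdd ht hs hl htl hsl hΔ hp ha.le hb hval hi hB,
      ← isSquare_sq_mul_iff ha0]
    congr! 1
    push_cast [pJ_ratCast]
    ring
  · rw [← exists_integral_eqnE_compl_iff, Padic.exists_integral_eqnE_iff_of_mem hcc hdd ht hs hl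
      htl hsl hΔ hp hb.le ha hval (mem_compl.2 hi) (by rwa [compl_compl]), compl_compl]
    push_cast [pJ_ratCast]
    rfl

theorem stmt_9_general (S₀ : Finset ℕ)
    {I : Type*} [Fintype I] [DecidableEq I]
    (cc dd : I → ℚ) (hcc : ∀ i, cc i ∈ ZS S₀) (hdd : ∀ i, dd i ∈ ZS S₀)
    (hcop : ∀ i, CoprimeZS S₀ (cc i) (dd i))
    (hΔ : ∀ i j : I, i ≠ j → cc j * dd i - cc i * dd j ≠ 0)
    (a b : ℚ) (ha : a ∈ ZS S₀) (hb : b ∈ ZS S₀) (ha0 : a ≠ 0) (hb0 : b ≠ 0)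
    (A : Finset I) (hA : Even A.card) (hB : Even Aᶜ.card)
    (p : ℕ) (hp : p.Prime) (hpodd : p ≠ 2) (hpS : p ∉ S₀)
    (hvd : padicValRat p (a * b) = 0)
    (hvΔ : ∀ i j : I, i ≠ j → padicValRat p (cc j * dd i - cc i * dd j) = 0)
    (i : I) (t s : Qp p hp) (ht : ‖t‖ ≤ 1) (hs : ‖s‖ ≤ 1)
    (hprim : ‖t‖ = 1 ∨ ‖s‖ = 1)
    (hval : ‖(cc i : Qp p hp) * t + (dd i : Qp p hp) * s‖ < 1) :
    (∃ x y : Qp p hp, ‖x‖ ≤ 1 ∧ ‖y‖ ≤ 1 ∧ EqnE cc dd A a b t s x y) ↔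
      IsSquare ((a * Dgen cc dd (a * b) A i : ℚ) : Qp p hp) := by
  have : Fact p.Prime := ⟨hp⟩
  obtain ⟨hva, hvb⟩ : padicValRat p a = 0 ∧ padicValRat p b = 0 := by
    have hsum := padicValRat.mul (p := p) ha0 hb0
    have ha' := ha p hp hpS
    have hb' := hb p hp hpS
    omega
  exact Padic.exists_integral_eqnE_iff hpodd
    (fun j => Padic.norm_ratCast_le_one_of_mem_ZS (hcc j) hpS)
    (fun j => Padic.norm_ratCast_le_one_of_mem_ZS (hdd j) hpS)
    ((hcop i).norm_eq_one_or hpS (hcc i) (hdd i))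
    (fun j hj => by exact_mod_cast Padic.norm_ratCast_eq_one (hΔ i j hj.symm) (hvΔ i j hj.symm))
    (Padic.norm_ratCast_eq_one ha0 hva) (Padic.norm_ratCast_eq_one hb0 hvb) hA hB ht hs hprim hval

/-- Lemma 3.15 (`l:fiber`): for a good odd prime `p` and `(t,s)` primitive in `ℤ_p²`
reducing to the zero locus of `p_i`, the fiber has an integral `ℤ_p`-point
if and only if `a·D^𝓐_i` is a square in `ℚ_p`. -/
theorem stmt_9 (S₀ : Finset ℕ) (hS₀ : ∀ p ∈ S₀, p.Prime)
    {I : Type*} [Fintype I] [DecidableEq I]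
    (hIpos : 0 < Fintype.card I) (hIeven : Even (Fintype.card I))
    (cc dd : I → ℚ) (hcc : ∀ i, cc i ∈ ZS S₀) (hdd : ∀ i, dd i ∈ ZS S₀)
    (hcop : ∀ i, CoprimeZS S₀ (cc i) (dd i))
    (hΔ : ∀ i j : I, i ≠ j → cc j * dd i - cc i * dd j ≠ 0)
    (a b : ℚ) (ha : a ∈ ZS S₀) (hb : b ∈ ZS S₀) (ha0 : a ≠ 0) (hb0 : b ≠ 0)
    (A : Finset I) (hA : Even A.card) (hB : Even Aᶜ.card)
    (p : ℕ) (hp : p.Prime) (hpodd : p ≠ 2) (hpS : p ∉ S₀)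
    (hvd : padicValRat p (a * b) = 0)
    (hvΔ : ∀ i j : I, i ≠ j → padicValRat p (cc j * dd i - cc i * dd j) = 0)
    (i : I) (t s : Qp p hp) (ht : ‖t‖ ≤ 1) (hs : ‖s‖ ≤ 1)
    (hprim : ‖t‖ = 1 ∨ ‖s‖ = 1)
    (hval : ‖(cc i : Qp p hp) * t + (dd i : Qp p hp) * s‖ < 1) :
    (∃ x y : Qp p hp, ‖x‖ ≤ 1 ∧ ‖y‖ ≤ 1 ∧ EqnE cc dd A a b t s x y) ↔
      IsSquare ((a * Dgen cc dd (a * b) A i : ℚ) : Qp p hp) :=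
  stmt_9_general S₀ cc dd hcc hdd hcop hΔ a b ha hb ha0 hb0 A hA hB p hp hpodd hpS hvd hvΔ i t s ht
    hs hprim hval
end
end

section
/- Let k be a number field, S_0 a finite set of finite places of k, and d ∈ 𝓞_{S_0} nonzero, not a square in k, with v(d) ≤ 1 for every finite place v ∉ S_0 and v(d) = 1 for every finite place v ∉ S_0 dividing 2. Let K = k(ω) with ω² = d, and let T_0 be the finite places of K lying above places of S_0. Let a ∈ 𝓞_{S_0} divide d in 𝓞_{S_0}. Then in the ring 𝓞_{T_0}, the square of the ideal generated by a and ω is the principal ideal generated by a: (a, ω)² = (a). -/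
/-!
Since `ω² = a e`, the ideal `(a, ω)² = (a², a ω, a e)` lies in `(a)` and contains `a (a, e)`, so it
suffices that `a` and `e` are coprime, which already holds in `𝓞_{S₀}`. A maximal ideal of `𝓞_{S₀}`
containing both cannot lie over a place `v ∉ S₀`, where positive valuations of `a` and `e` would
force `v(d) ≥ 2`; nor over a place of `S₀`, since some power of that place is principal (the class
group is finite) and its generator is a unit of `𝓞_{S₀}`.
-/

noncomputable section

open IsDedekindDomain NumberField
open scoped Multiplicative

open IsDedekindDomain.HeightOneSpectrum WithZero
open scoped nonZeroDivisors

theorem WithZero.mul_lt_exp_neg_one {x y : ℤᵐ⁰} (hx : x < 1) (hy : y < 1) :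
    x * y < exp (-1) := by
  have le_of_lt_one {z : ℤᵐ⁰} (hz : z < 1) : z ≤ exp (-1) :=
    (lt_mul_exp_iff_le exp_ne_zero).mp (by rwa [← exp_add, neg_add_cancel, exp_zero])
  calc x * y ≤ exp (-1) * exp (-1) := mul_le_mul' (le_of_lt_one hx) (le_of_lt_one hy)
    _ < exp (-1) := by rw [← exp_add, exp_lt_exp]; norm_num

theorem Ideal.isPrincipal_pow_card_classGroup {R : Type*} [CommRing R] [IsDedekindDomain R]
    [Finite (ClassGroup R)] (I : Ideal R) : (I ^ Nat.card (ClassGroup R)).IsPrincipal := by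
  rcases eq_or_ne I ⊥ with rfl | hI
  · rw [Ideal.bot_pow Nat.card_pos.ne']
    exact bot_isPrincipal
  have hI0 := mem_nonZeroDivisors_of_ne_zero hI
  rw [← ClassGroup.mk0_eq_one_iff (pow_mem hI0 _), ← SubmonoidClass.mk_pow, map_pow,
    pow_card_eq_one']
  exact hI0

theorem Ideal.span_pair_sq_eq_span_singleton {R : Type*} [CommRing R] {a b c : R}
    (hb : b * b = a * c) (hac : Ideal.span {a, c} = ⊤) :
    Ideal.span {a, b} ^ 2 = Ideal.span {a} := by
  obtain ⟨x, y, hxy⟩ := Ideal.mem_span_pair.mp (hac ▸ Submodule.mem_top : (1 : R) ∈ _)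
  rw [sq, Ideal.span_pair_mul_span_pair]
  apply le_antisymm
  · simp only [Ideal.span_le, Set.insert_subset_iff, Set.singleton_subset_iff, SetLike.mem_coe,
      Ideal.mem_span_singleton, hb]
    exact ⟨dvd_mul_right a a, dvd_mul_right a b, dvd_mul_left a b, dvd_mul_right a c⟩
  · rw [Ideal.span_singleton_le_iff_mem]
    have haa : a * a ∈ Ideal.span {a * a, a * b, b * a, b * b} := Ideal.subset_span (by simp)
    have hbb : b * b ∈ Ideal.span {a * a, a * b, b * a, b * b} := Ideal.subset_span (by simp)
    convert Ideal.add_mem _ (Ideal.mul_mem_left _ x haa) (Ideal.mul_mem_left _ y hbb) using 1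
    linear_combination (-a) * hxy - y * hb

namespace Set.integer

variable {R : Type*} [CommRing R] [IsDedekindDomain R] {K : Type*} [Field K] [Algebra R K]
  [IsFractionRing R K] {S : Set (HeightOneSpectrum R)}

theorem exists_mem_isUnit_algebraMap [Finite (ClassGroup R)] {w : HeightOneSpectrum R}
    (hw : w ∈ S) : ∃ t ∈ w.asIdeal, IsUnit (algebraMap R (S.integer K) t) := by
  have hn : Nat.card (ClassGroup R) ≠ 0 := Nat.card_pos.ne'
  obtain ⟨t, ht⟩ := (Ideal.isPrincipal_pow_card_classGroup w.asIdeal).principal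
  have ht0 : algebraMap R K t ≠ 0 := by
    rw [map_ne_zero_iff _ (IsFractionRing.injective R K)]
    rintro rfl
    exact w.ne_bot (pow_eq_zero_iff hn |>.mp (by simpa using ht))
  have hval : ∀ u ∉ S, u.valuation K (algebraMap R K t) = 1 := by
    intro u hu
    rw [valuation_eq_one_iff_notMem]
    intro htu
    have hwu : w.asIdeal ≤ u.asIdeal := (u.isPrime.pow_le_iff hn).mp <| by
      rw [ht, Ideal.span_le, Set.singleton_subset_iff]; exact htu
    exact hu (HeightOneSpectrum.ext (w.isMaximal.eq_of_le u.isPrime.ne_top hwu) ▸ hw)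
  refine ⟨t, Ideal.pow_le_self hn (ht ▸ Ideal.mem_span_singleton_self t), ?_⟩
  refine isUnit_iff_exists_inv.mpr ⟨⟨(algebraMap R K t)⁻¹, fun u hu => ?_⟩, Subtype.ext ?_⟩
  · rw [map_inv₀, hval u hu, inv_one]
  · exact mul_inv_cancel₀ ht0

theorem valuation_lt_one_of_mem {p : Ideal (S.integer K)} {w : HeightOneSpectrum R} (hw : w ∉ S)
    (hpw : p.comap (algebraMap R (S.integer K)) = w.asIdeal) {z : S.integer K} (hz : z ∈ p) :
    w.valuation K z < 1 := by
  obtain ⟨n, d, hnd⟩ := exists_primeCompl_mul_eq_of_integer w (z : K) (z.2 w hw)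
  have hn : n ∈ w.asIdeal := by
    rw [← hpw, Ideal.mem_comap]
    convert p.mul_mem_right (algebraMap R (S.integer K) d) hz
    exact Subtype.ext hnd.symm
  have hd := (intValuation_eq_one_iff_mem_primeCompl w d).mpr d.2
  have hzn := congrArg (w.valuation K) hnd
  rw [map_mul, valuation_of_algebraMap, valuation_of_algebraMap, hd, mul_one] at hzn
  rw [hzn]
  exact (intValuation_lt_one_iff_mem w n).mpr hn

theorem comap_ne_bot_of_mem {p : Ideal (S.integer K)} {z : S.integer K} (hz0 : z ≠ 0)
    (hz : z ∈ p) : p.comap (algebraMap R (S.integer K)) ≠ ⊥ := by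
  obtain ⟨⟨n, d⟩, hnd⟩ := IsLocalization.surj R⁰ (z : K)
  have hn0 : n ≠ 0 := by
    rintro rfl
    simp only [map_zero, mul_eq_zero, map_eq_zero_iff _ (IsFractionRing.injective R K)] at hnd
    exact hnd.elim (fun h => hz0 (Subtype.ext h)) (nonZeroDivisors.coe_ne_zero d)
  refine fun hbot => hn0 ((Submodule.mem_bot R).mp (hbot ▸ ?_))
  rw [Ideal.mem_comap]
  convert p.mul_mem_right (algebraMap R (S.integer K) d) hz
  exact Subtype.ext hnd.symm

theorem span_pair_eq_top [Finite (ClassGroup R)] {x y : S.integer K} (hx : x ≠ 0)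
    (hxy : ∀ v ∉ S, ¬ (v.valuation K x < 1 ∧ v.valuation K y < 1)) :
    Ideal.span {x, y} = ⊤ := by
  by_contra hne
  obtain ⟨m, hm, hle⟩ := Ideal.exists_le_maximal _ hne
  have hxm : x ∈ m := hle (Ideal.subset_span (by simp))
  have hym : y ∈ m := hle (Ideal.subset_span (by simp))
  let w : HeightOneSpectrum R := ⟨_, hm.isPrime.comap _, comap_ne_bot_of_mem hx hxm⟩
  by_cases hw : w ∈ S
  · obtain ⟨t, ht, hunit⟩ := exists_mem_isUnit_algebraMap (K := K) hw
    exact hm.ne_top (m.eq_top_of_isUnit_mem ht hunit)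
  · exact hxy w hw ⟨valuation_lt_one_of_mem hw rfl hxm, valuation_lt_one_of_mem hw rfl hym⟩

end Set.integer

namespace IsDedekindDomain.HeightOneSpectrum

variable {R : Type*} [CommRing R] [IsDedekindDomain R] {A : Type*} [CommRing A]
  [IsDedekindDomain A] [Algebra R A] [Algebra.IsIntegral R A]
  (k K : Type*) [Field k] [Field K] [Algebra R k] [IsFractionRing R k] [Algebra A K]
  [IsFractionRing A K] [Algebra k K] [Algebra R K] [IsScalarTower R k K] [IsScalarTower R A K]

theorem valuation_algebraMap_le_one {w : HeightOneSpectrum A} {x : k}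
    (hx : (w.under R).valuation k x ≤ 1) : w.valuation K (algebraMap k K x) ≤ 1 := by
  obtain ⟨n, d, hnd⟩ := exists_primeCompl_mul_eq_of_integer (w.under R) x hx
  have hd : w.intValuation (algebraMap R A d) = 1 :=
    (intValuation_eq_one_iff_mem_primeCompl w _).mpr d.2
  have hxn := congrArg (fun y => w.valuation K (algebraMap k K y)) hnd
  simp only [map_mul, ← IsScalarTower.algebraMap_apply] at hxn
  rw [IsScalarTower.algebraMap_apply R A K, IsScalarTower.algebraMap_apply R A K,
    valuation_of_algebraMap, valuation_of_algebraMap, hd, mul_one] at hxn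
  exact hxn ▸ w.intValuation_le_one _

end IsDedekindDomain.HeightOneSpectrum

namespace Set.integer

variable {R : Type*} [CommRing R] [IsDedekindDomain R] {A : Type*} [CommRing A]
  [IsDedekindDomain A] [Algebra R A] [Algebra.IsIntegral R A]
  (k K : Type*) [Field k] [Field K] [Algebra R k] [IsFractionRing R k] [Algebra A K]
  [IsFractionRing A K] [Algebra k K] [Algebra R K] [IsScalarTower R k K] [IsScalarTower R A K]
  {S : Set (HeightOneSpectrum R)} {T : Set (HeightOneSpectrum A)}

theorem algebraMap_mem (hST : ∀ w ∉ T, w.under R ∉ S) {x : k} (hx : x ∈ S.integer k) :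
    algebraMap k K x ∈ T.integer K :=
  fun w hw => valuation_algebraMap_le_one k K (hx _ (hST w hw))

def map (hST : ∀ w ∉ T, w.under R ∉ S) : S.integer k →+* T.integer K :=
  ((algebraMap k K).comp (S.integer k).val).codRestrict (T.integer K)
    fun x => algebraMap_mem k K hST x.2

end Set.integer

theorem stmt_12_general (k : Type*) [Field k] [NumberField k]
    (S₀ : Set (HeightOneSpectrum (𝓞 k)))
    (d : k) (hd : d ∈ S₀.integer k) (hd0 : d ≠ 0)
    (hval : ∀ v : HeightOneSpectrum (𝓞 k), v ∉ S₀ →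
      ((Multiplicative.ofAdd (-1 : ℤ) : Multiplicative ℤ) : WithZero (Multiplicative ℤ)) ≤ v.valuation k d)
    (K : Type*) [Field K] [NumberField K] [Algebra k K]
    (ω : K) (hω : ω ^ 2 = algebraMap k K d)
    (T₀ : Set (HeightOneSpectrum (𝓞 K)))
    (hT₀ : T₀ = {w | ∃ v ∈ S₀,
      Ideal.comap (algebraMap (𝓞 k) (𝓞 K)) w.asIdeal = v.asIdeal})
    (a e : k) (ha : a ∈ S₀.integer k) (he : e ∈ S₀.integer k) (hae : a * e = d) :
    (Ideal.span {x : T₀.integer K |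
        (x : K) = algebraMap k K a ∨ (x : K) = ω}) ^ 2 =
      Ideal.span {x : T₀.integer K | (x : K) = algebraMap k K a} := by
  have ha0 : a ≠ 0 := left_ne_zero_of_mul (hae.symm ▸ hd0 : a * e ≠ 0)
  have hcop : Ideal.span {(⟨a, ha⟩ : S₀.integer k), ⟨e, he⟩} = ⊤ := by
    refine Set.integer.span_pair_eq_top (fun h => ha0 (congrArg Subtype.val h))
      fun v hv h => (hval v hv).not_gt ?_
    rw [← hae, map_mul]
    exact mul_lt_exp_neg_one h.1 h.2
  have hST : ∀ w ∉ T₀, w.under (𝓞 k) ∉ S₀ := fun w hw hv => hw (hT₀ ▸ ⟨_, hv, rfl⟩)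
  let f := Set.integer.map k K hST
  have hωint : ω ∈ T₀.integer K := fun w hw => (pow_le_one_iff two_ne_zero).mp <| by
    rw [← map_pow, hω]; exact Set.integer.algebraMap_mem k K hST hd w hw
  let Ω : T₀.integer K := ⟨ω, hωint⟩
  have hΩ : Ω * Ω = f ⟨a, ha⟩ * f ⟨e, he⟩ :=
    Subtype.ext (by simp [Ω, f, Set.integer.map, ← sq, hω, ← hae])
  have hcop' : Ideal.span {f ⟨a, ha⟩, f ⟨e, he⟩} = ⊤ := by
    rw [← Set.image_pair, ← Ideal.map_span, hcop, Ideal.map_top]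
  convert Ideal.span_pair_sq_eq_span_singleton hΩ hcop' using 3 <;> ext x <;>
    simp [Subtype.ext_iff, Ω, f, Set.integer.map]

/-- In `𝓞_{T₀}`, the square of the ideal generated by `a` and `ω = √d` is the principal
ideal generated by `a`, for any divisor `a` of `d` in `𝓞_{S₀}`: `(a, ω)² = (a)`. -/
theorem stmt_12 (k : Type*) [Field k] [NumberField k]
    (S₀ : Set (HeightOneSpectrum (𝓞 k))) (hS₀fin : S₀.Finite)
    (d : k) (hd : d ∈ S₀.integer k) (hd0 : d ≠ 0) (hdsq : ¬ IsSquare d)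
    (hval : ∀ v : HeightOneSpectrum (𝓞 k), v ∉ S₀ →
      ((Multiplicative.ofAdd (-1 : ℤ) : Multiplicative ℤ) : WithZero (Multiplicative ℤ)) ≤ v.valuation k d)
    (hval2 : ∀ v : HeightOneSpectrum (𝓞 k), v ∉ S₀ → (2 : 𝓞 k) ∈ v.asIdeal →
      v.valuation k d = ((Multiplicative.ofAdd (-1 : ℤ) : Multiplicative ℤ) : WithZero (Multiplicative ℤ)))
    (K : Type*) [Field K] [NumberField K] [Algebra k K]
    (ω : K) (hω : ω ^ 2 = algebraMap k K d) (hgen : Algebra.adjoin k {ω} = ⊤)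
    (T₀ : Set (HeightOneSpectrum (𝓞 K)))
    (hT₀ : T₀ = {w | ∃ v ∈ S₀,
      Ideal.comap (algebraMap (𝓞 k) (𝓞 K)) w.asIdeal = v.asIdeal})
    (a e : k) (ha : a ∈ S₀.integer k) (he : e ∈ S₀.integer k) (hae : a * e = d) :
    (Ideal.span {x : T₀.integer K |
        (x : K) = algebraMap k K a ∨ (x : K) = ω}) ^ 2 =
      Ideal.span {x : T₀.integer K | (x : K) = algebraMap k K a} :=
  stmt_12_general k S₀ d hd hd0 hval K ω hω T₀ hT₀ a e ha he hae
end
end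

section
/- Let p be an odd prime such that c_j, d_j ∈ ℤ_p for all j ∈ 𝓘 and val_p(Δ_{i,j}) = 0 for all i ≠ j. Fix i ∈ 𝓘, a unit r ∈ ℤ_p^×, and t, s ∈ ℤ_p with t ≡ r·d_i (mod p·ℤ_p) and s ≡ −r·c_i (mod p·ℤ_p). Then for every subset 𝓙 ⊆ 𝓘 with i ∉ 𝓙, the element p_𝓙(t,s) is a unit of ℤ_p and the quotient p_𝓙(t,s) / (r^{|𝓙|}·p_𝓙(d_i,−c_i)) is a square in ℤ_p^×; consequently, for any c ∈ ℚ_p^×, the elements c·p_𝓙(t,s) and c·r^{|𝓙|}·p_𝓙(d_i,−c_i) lie in the same class of ℚ_p^×/(ℚ_p^×)². -/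
/-
Each factor `c_j t + d_j s` of `p_𝓙(t,s)` is congruent mod `p` to the unit `r·Δ_{i,j}`, so the
quotient `p_𝓙(t,s) / (r^{|𝓙|}·p_𝓙(d_i,−c_i))` is a product of principal units and hence itself
`≡ 1 (mod p)`. Since `p` is odd, the derivative `2X` of `X² − x` is a unit at `X = 1`, and
Hensel's lemma makes every principal unit a square.
-/

noncomputable section

open Finset

section Ultrametric

variable {R : Type*} [NormedRing R] [NormOneClass R] [IsUltrametricDist R]

lemma norm_eq_one_of_norm_sub_one_lt {x : R} (hx : ‖x - 1‖ < 1) : ‖x‖ = 1 := by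
  simpa [max_eq_right hx.le] using
    IsUltrametricDist.norm_add_eq_max_of_norm_ne_norm (x := x - 1) (y := 1)
      (by simpa using hx.ne)

lemma norm_mul_sub_one_lt_one {x y : R} (hx : ‖x - 1‖ < 1) (hy : ‖y - 1‖ < 1) :
    ‖x * y - 1‖ < 1 := by
  rw [show x * y - 1 = x * (y - 1) + (x - 1) by noncomm_ring]
  refine (IsUltrametricDist.norm_add_le_max _ _).trans_lt (max_lt ?_ hx)
  calc ‖x * (y - 1)‖ ≤ ‖x‖ * ‖y - 1‖ := norm_mul_le _ _
    _ ≤ 1 * ‖y - 1‖ := by gcongr; exact (norm_eq_one_of_norm_sub_one_lt hx).le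
    _ < 1 := by rwa [one_mul]

lemma norm_prod_sub_one_lt_one {R : Type*} [NormedCommRing R] [NormOneClass R]
    [IsUltrametricDist R] {ι : Type*} (J : Finset ι) (f : ι → R)
    (hf : ∀ j ∈ J, ‖f j - 1‖ < 1) : ‖∏ j ∈ J, f j - 1‖ < 1 :=
  prod_induction f (fun x ↦ ‖x - 1‖ < 1) (fun _ _ ↦ norm_mul_sub_one_lt_one) (by simp) hf

end Ultrametric

lemma isSquare_sq_mul_iff_s14 {K : Type*} [CommGroupWithZero K] {u : K} (hu : u ≠ 0) (y : K) :
    IsSquare (u ^ 2 * y) ↔ IsSquare y := by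
  refine ⟨fun h ↦ ?_, (IsSquare.sq u).mul⟩
  simpa [hu] using h.div (IsSquare.sq u)

section pJ

variable {I F : Type*} [Field F] (cc dd : I → ℚ) (J : Finset I)

lemma pJ_mul_mul (r t s : F) : pJ cc dd J (r * t) (r * s) = r ^ J.card * pJ cc dd J t s := by
  rw [pJ, pJ, ← prod_const, ← prod_mul_distrib]
  exact prod_congr rfl fun j _ ↦ by ring

lemma ratCast_pJ [CharZero F] (t s : ℚ) :
    ((pJ cc dd J t s : ℚ) : F) = pJ cc dd J (t : F) (s : F) := by
  simp [pJ]

end pJ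

namespace PadicInt

variable {p : ℕ} [Fact p.Prime]

lemma norm_two (hp : p ≠ 2) : ‖(2 : ℤ_[p])‖ = 1 := by
  have : p.Coprime 2 := (Nat.coprime_primes Fact.out Nat.prime_two).mpr hp
  exact_mod_cast norm_natCast_eq_one_iff.mpr this

lemma exists_sq_eq_of_norm_sub_one_lt (hp : p ≠ 2) {x : ℤ_[p]} (hx : ‖x - 1‖ < 1) :
    ∃ z : ℤ_[p], z ^ 2 = x := by
  set F : Polynomial ℤ_[p] := Polynomial.X ^ 2 - Polynomial.C x
  have hnorm : ‖F.aeval (1 : ℤ_[p])‖ < ‖F.derivative.aeval (1 : ℤ_[p])‖ ^ 2 := by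
    simpa [F, one_add_one_eq_two, norm_two hp, norm_sub_rev] using hx
  obtain ⟨z, hz, -⟩ := hensels_lemma hnorm
  exact ⟨z, sub_eq_zero.mp (by simpa [F] using hz)⟩

end PadicInt

namespace Padic

variable {p : ℕ} [Fact p.Prime]

lemma norm_ratCast_le_one_of_padicValRat_nonneg {q : ℚ} (hq : 0 ≤ padicValRat p q) :
    ‖(q : ℚ_[p])‖ ≤ 1 := by
  rcases eq_or_ne q 0 with rfl | hq0
  · simp
  rw [eq_padicNorm, padicNorm.eq_zpow_of_nonzero hq0]
  have hp1 : (1 : ℚ) ≤ p := by exact_mod_cast (Fact.out : p.Prime).one_le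
  exact_mod_cast zpow_le_one_of_nonpos₀ hp1 (neg_nonpos.mpr hq)

lemma norm_ratCast_eq_one_of_padicValRat_eq_zero {q : ℚ} (hq0 : q ≠ 0)
    (hq : padicValRat p q = 0) : ‖(q : ℚ_[p])‖ = 1 := by
  simp [eq_padicNorm, padicNorm.eq_zpow_of_nonzero hq0, hq]

lemma exists_sq_eq_of_norm_sub_one_lt (hp : p ≠ 2) {x : ℚ_[p]} (hx : ‖x - 1‖ < 1) :
    ∃ u : ℚ_[p], ‖u‖ = 1 ∧ u ^ 2 = x := by
  obtain ⟨z, hz⟩ := PadicInt.exists_sq_eq_of_norm_sub_one_lt hp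
    (x := ⟨x, (norm_eq_one_of_norm_sub_one_lt hx).le⟩) (by rw [PadicInt.norm_def]; exact hx)
  have hzx : (z : ℚ_[p]) ^ 2 = x := by exact_mod_cast congrArg ((↑) : ℤ_[p] → ℚ_[p]) hz
  have hx1 := norm_eq_one_of_norm_sub_one_lt hx
  refine ⟨z, ?_, hzx⟩
  rw [← hzx, norm_pow] at hx1
  exact (pow_eq_one_iff_of_nonneg (norm_nonneg _) two_ne_zero).mp hx1

lemma exists_prod_eq_sq_mul_prod (hp : p ≠ 2) {ι : Type*} {J : Finset ι} {f g : ι → ℚ_[p]}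
    (hg : ∀ j ∈ J, ‖g j‖ = 1) (hfg : ∀ j ∈ J, ‖f j - g j‖ < 1) :
    ∃ u : ℚ_[p], ‖u‖ = 1 ∧ ∏ j ∈ J, f j = u ^ 2 * ∏ j ∈ J, g j := by
  have hg0 : ∀ j ∈ J, g j ≠ 0 := fun j hj h ↦ by simpa [h] using hg j hj
  have hquot : ‖∏ j ∈ J, f j / g j - 1‖ < 1 :=
    norm_prod_sub_one_lt_one J _ fun j hj ↦ by
      rw [div_sub_one (hg0 j hj), norm_div, hg j hj, div_one]
      exact hfg j hj
  obtain ⟨u, hu, hsq⟩ := exists_sq_eq_of_norm_sub_one_lt hp hquot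
  refine ⟨u, hu, ?_⟩
  rw [hsq, ← prod_mul_distrib]
  exact prod_congr rfl fun j hj ↦ (div_mul_cancel₀ _ (hg0 j hj)).symm

variable {I : Type*} {cc dd : I → ℚ} {J : Finset I} {x y : ℚ}

lemma norm_ratCast_pJ_eq_one (hxy : ∀ j ∈ J, ‖((cc j * x + dd j * y : ℚ) : ℚ_[p])‖ = 1) :
    ‖((pJ cc dd J x y : ℚ) : ℚ_[p])‖ = 1 := by
  rw [pJ, Rat.cast_prod, norm_prod]
  exact prod_eq_one hxy

lemma exists_pJ_eq_sq_mul (hp : p ≠ 2) (hcc : ∀ j ∈ J, ‖(cc j : ℚ_[p])‖ ≤ 1)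
    (hdd : ∀ j ∈ J, ‖(dd j : ℚ_[p])‖ ≤ 1)
    (hxy : ∀ j ∈ J, ‖((cc j * x + dd j * y : ℚ) : ℚ_[p])‖ = 1)
    {r t s : ℚ_[p]} (hr : ‖r‖ = 1) (ht : ‖t - r * x‖ < 1) (hs : ‖s - r * y‖ < 1) :
    ∃ u : ℚ_[p], ‖u‖ = 1 ∧
      pJ cc dd J t s = u ^ 2 * (r ^ J.card * ((pJ cc dd J x y : ℚ) : ℚ_[p])) := by
  have hg : ∀ j ∈ J, ‖(cc j : ℚ_[p]) * (r * x) + dd j * (r * y)‖ = 1 := fun j hj ↦ by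
    rw [show (cc j : ℚ_[p]) * (r * x) + dd j * (r * y)
        = r * ((cc j * x + dd j * y : ℚ) : ℚ_[p]) by push_cast; ring,
      norm_mul, hr, hxy j hj, one_mul]
  have hfg : ∀ j ∈ J,
      ‖((cc j : ℚ_[p]) * t + dd j * s) - (cc j * (r * x) + dd j * (r * y))‖ < 1 := fun j hj ↦ by
    rw [show ((cc j : ℚ_[p]) * t + dd j * s) - (cc j * (r * x) + dd j * (r * y))
      = cc j * (t - r * x) + dd j * (s - r * y) by ring]
    refine (IsUltrametricDist.norm_add_le_max _ _).trans_lt (max_lt ?_ ?_) <;>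
      rw [norm_mul]
    exacts [mul_lt_one_of_nonneg_of_lt_one_right (hcc j hj) (norm_nonneg _) ht,
      mul_lt_one_of_nonneg_of_lt_one_right (hdd j hj) (norm_nonneg _) hs]
  obtain ⟨u, hu, hprod⟩ := exists_prod_eq_sq_mul_prod hp hg hfg
  refine ⟨u, hu, ?_⟩
  rw [ratCast_pJ, ← pJ_mul_mul]
  exact hprod

end Padic

theorem stmt_14_general {I : Type*}
    (cc dd : I → ℚ)
    (p : ℕ) (hp : p.Prime) (hpodd : p ≠ 2)
    (hcc : ∀ j, 0 ≤ padicValRat p (cc j)) (hdd : ∀ j, 0 ≤ padicValRat p (dd j))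
    (hΔ : ∀ i j : I, i ≠ j → cc j * dd i - cc i * dd j ≠ 0)
    (hvΔ : ∀ i j : I, i ≠ j → padicValRat p (cc j * dd i - cc i * dd j) = 0)
    (i : I) (r : Qp p hp) (hr : ‖r‖ = 1)
    (t s : Qp p hp)
    (htcong : ‖t - r * (dd i : Qp p hp)‖ ≤ (p : ℝ)⁻¹)
    (hscong : ‖s - r * (-(cc i : Qp p hp))‖ ≤ (p : ℝ)⁻¹) :
    ∀ J : Finset I, i ∉ J →
      ‖pJ cc dd J t s‖ = 1 ∧
      (∃ u : Qp p hp, ‖u‖ = 1 ∧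
        pJ cc dd J t s =
          u ^ 2 * (r ^ J.card * ((pJ cc dd J (dd i) (-(cc i)) : ℚ) : Qp p hp))) ∧
      (∀ c : Qp p hp, c ≠ 0 →
        (IsSquare (c * pJ cc dd J t s) ↔
          IsSquare (c * r ^ J.card * ((pJ cc dd J (dd i) (-(cc i)) : ℚ) : Qp p hp)))) := by
  have : Fact p.Prime := ⟨hp⟩
  intro J hiJ
  have hunit : ∀ j ∈ J, ‖((cc j * dd i + dd j * -cc i : ℚ) : Qp p hp)‖ = 1 := fun j hj ↦ by
    have hij : i ≠ j := fun h ↦ hiJ (h ▸ hj)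
    rw [show cc j * dd i + dd j * -cc i = cc j * dd i - cc i * dd j by ring]
    exact Padic.norm_ratCast_eq_one_of_padicValRat_eq_zero (hΔ i j hij) (hvΔ i j hij)
  have hp1 : (p : ℝ)⁻¹ < 1 := inv_lt_one_of_one_lt₀ (by exact_mod_cast hp.one_lt)
  set P : Qp p hp := ((pJ cc dd J (dd i) (-(cc i)) : ℚ) : Qp p hp)
  have hP : ‖P‖ = 1 := Padic.norm_ratCast_pJ_eq_one hunit
  -- `Qp p hp` is `ℚ_[p]` only up to unfolding, so the statement is pinned to `Qp p hp` first.
  obtain ⟨u, hu, hkey⟩ : ∃ u : Qp p hp, ‖u‖ = 1 ∧ pJ cc dd J t s = u ^ 2 * (r ^ J.card * P) := by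
    exact Padic.exists_pJ_eq_sq_mul hpodd
      (fun j _ ↦ Padic.norm_ratCast_le_one_of_padicValRat_nonneg (hcc j))
      (fun j _ ↦ Padic.norm_ratCast_le_one_of_padicValRat_nonneg (hdd j)) hunit hr
      (htcong.trans_lt hp1) (by rw [Rat.cast_neg]; exact hscong.trans_lt hp1)
  refine ⟨?_, ⟨u, hu, hkey⟩, fun c _ ↦ ?_⟩
  · rw [hkey, norm_mul, norm_mul, norm_pow, norm_pow, hu, hr, hP]
    simp
  · rw [hkey, show c * (u ^ 2 * (r ^ J.card * P)) = u ^ 2 * (c * r ^ J.card * P) by ring]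
    exact isSquare_sq_mul_iff_s14 (by rintro rfl; simp at hu) _

/-- If `p` is an odd prime at which all the `c_j, d_j` are integral and all the
`Δ_{i,j}` are units, and `(t,s) ∈ ℤ_p²` is congruent to `(r·d_i, −r·c_i)` mod `p` for a
unit `r`, then for every `𝓙 ⊆ 𝓘` with `i ∉ 𝓙` the element `p_𝓙(t,s)` is a unit of `ℤ_p`,
its quotient by `r^{|𝓙|}·p_𝓙(d_i,−c_i)` is a square in `ℤ_p^×`, and for every
`c ∈ ℚ_p^×` the elements `c·p_𝓙(t,s)` and `c·r^{|𝓙|}·p_𝓙(d_i,−c_i)` lie in the same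
class of `ℚ_p^×/(ℚ_p^×)²`. -/
theorem stmt_14 {I : Type*} [Fintype I] [DecidableEq I]
    (cc dd : I → ℚ) (hnz : ∀ j, cc j ≠ 0 ∨ dd j ≠ 0)
    (p : ℕ) (hp : p.Prime) (hpodd : p ≠ 2)
    (hcc : ∀ j, 0 ≤ padicValRat p (cc j)) (hdd : ∀ j, 0 ≤ padicValRat p (dd j))
    (hΔ : ∀ i j : I, i ≠ j → cc j * dd i - cc i * dd j ≠ 0)
    (hvΔ : ∀ i j : I, i ≠ j → padicValRat p (cc j * dd i - cc i * dd j) = 0)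
    (i : I) (r : Qp p hp) (hr : ‖r‖ = 1)
    (t s : Qp p hp) (ht : ‖t‖ ≤ 1) (hs : ‖s‖ ≤ 1)
    (htcong : ‖t - r * (dd i : Qp p hp)‖ ≤ (p : ℝ)⁻¹)
    (hscong : ‖s - r * (-(cc i : Qp p hp))‖ ≤ (p : ℝ)⁻¹) :
    ∀ J : Finset I, i ∉ J →
      ‖pJ cc dd J t s‖ = 1 ∧
      (∃ u : Qp p hp, ‖u‖ = 1 ∧
        pJ cc dd J t s =
          u ^ 2 * (r ^ J.card * ((pJ cc dd J (dd i) (-(cc i)) : ℚ) : Qp p hp))) ∧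
      (∀ c : Qp p hp, c ≠ 0 →
        (IsSquare (c * pJ cc dd J t s) ↔
          IsSquare (c * r ^ J.card * ((pJ cc dd J (dd i) (-(cc i)) : ℚ) : Qp p hp)))) :=
  stmt_14_general cc dd p hp hpodd hcc hdd hΔ hvΔ i r hr t s htcong hscong
end
end

section
/- Let 𝓘 be a nonempty finite index set and for each i ∈ 𝓘 let c_i, d_i ∈ ℚ, not both zero, with Δ_{i,j} := c_j·d_i − c_i·d_j ≠ 0 for all i ≠ j. Let d ∈ ℚ*. Then for every place v of ℚ (ℚ_v = ℚ_p for a prime p, or ℝ) there exist t, s ∈ ℚ_v such that −d·p_𝓘(t,s) is a nonzero square in ℚ_v. -/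
noncomputable section

/-! Pick one factor `pᵢ` and restrict `p_𝓘` to a line through a zero of `pᵢ`, parametrised so
that `pᵢ = x` on it. There `p_𝓘 = x · G(x)` with `G(0) ≠ 0`, since no other factor is
proportional to `pᵢ`. Taking `x = a² / (-d G(0))` makes `-d · p_𝓘 = a² · G(x) / G(0)`, and for
small `a ≠ 0` the last factor is close to `1`, hence a square: in `ℝ` because it is positive, in
`ℚ_p` by Hensel's lemma applied to `X² - c` at `1`. -/

open Filter Topology Polynomial

theorem PadicInt.isSquare_of_norm_sub_one_lt {p : ℕ} [Fact p.Prime] {c : ℤ_[p]}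
    (h : ‖c - 1‖ < ‖(2 : ℤ_[p])‖ ^ 2) : IsSquare c := by
  have hF : ‖(X ^ 2 - C c).aeval (1 : ℤ_[p])‖ <
      ‖(derivative (X ^ 2 - C c)).aeval (1 : ℤ_[p])‖ ^ 2 := by
    simpa [norm_sub_rev, one_add_one_eq_two] using h
  obtain ⟨z, hz, -⟩ := hensels_lemma hF
  exact ⟨z, by simpa [sq, sub_eq_zero, eq_comm] using hz⟩

theorem Padic.eventually_isSquare_nhds_one {p : ℕ} [Fact p.Prime] :
    ∀ᶠ c in 𝓝 (1 : ℚ_[p]), IsSquare c := by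
  have h2 : 0 < ‖(2 : ℚ_[p])‖ ^ 2 := pow_pos (norm_pos_iff.2 two_ne_zero) 2
  filter_upwards [Metric.ball_mem_nhds 1 h2] with c hc
  rw [Metric.mem_ball, dist_eq_norm] at hc
  have hc1 : ‖c - 1‖ < 1 := hc.trans_le (pow_le_one₀ (norm_nonneg _) (Padic.norm_int_le_one 2))
  have hc_int : ‖c‖ ≤ 1 := by
    simpa using (Padic.nonarchimedean (c - 1) 1).trans (max_le hc1.le (by simp))
  obtain ⟨z, hz⟩ := PadicInt.isSquare_of_norm_sub_one_lt (c := ⟨c, hc_int⟩) (by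
    rw [PadicInt.norm_def, PadicInt.norm_def]; exact_mod_cast hc)
  exact ⟨z, by simpa using congrArg ((↑) : ℤ_[p] → ℚ_[p]) hz⟩

theorem Real.eventually_isSquare_nhds_one : ∀ᶠ c in 𝓝 (1 : ℝ), IsSquare c :=
  (lt_mem_nhds one_pos).mono fun _ hc => ⟨√_, (Real.mul_self_sqrt hc.le).symm⟩

theorem exists_ne_zero_sq_eq_mul_mul_apply {F : Type*} [NontriviallyNormedField F]
    (hsq : ∀ᶠ c in 𝓝 (1 : F), IsSquare c) {G : F → F} (hG : ContinuousAt G 0) (hG0 : G 0 ≠ 0)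
    {c : F} (hc : c ≠ 0) : ∃ x r : F, r ≠ 0 ∧ r ^ 2 = c * (x * G x) := by
  set φ : F → F := fun a => G (a ^ 2 / (c * G 0)) / G 0
  have hφ : Tendsto φ (𝓝 0) (𝓝 1) := by
    have : ContinuousAt φ 0 := by
      refine ContinuousAt.div_const
        (ContinuousAt.comp (f := fun a : F => a ^ 2 / (c * G 0)) (by simpa using hG) ?_) _
      fun_prop
    simpa [φ, hG0] using this.tendsto
  have hne : ∀ᶠ a in 𝓝[≠] (0 : F), a ≠ 0 := self_mem_nhdsWithin
  obtain ⟨a, ⟨⟨b, hb⟩, hφa⟩, ha⟩ :=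
    (((hφ.eventually (hsq.and (isOpen_ne.mem_nhds one_ne_zero))).filter_mono
      nhdsWithin_le_nhds).and hne).exists
  have hb0 : b ≠ 0 := by rintro rfl; exact hφa (by simpa using hb)
  refine ⟨a ^ 2 / (c * G 0), a * b, mul_ne_zero ha hb0, ?_⟩
  have : G (a ^ 2 / (c * G 0)) = b * b * G 0 := by rw [← hb]; simp [φ, hG0]
  rw [this]
  field_simp

theorem exists_pJ_eq_mul {I F : Type*} [Field F] [TopologicalSpace F] [IsTopologicalRing F]
    [CharZero F] (cc dd : I → ℚ) {J : Finset I} {i : I} (hiJ : i ∈ J) (hi : cc i ≠ 0 ∨ dd i ≠ 0)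
    (hΔ : ∀ j ∈ J, j ≠ i → cc j * dd i - cc i * dd j ≠ 0) :
    ∃ G : F → F, ContinuousAt G 0 ∧ G 0 ≠ 0 ∧ ∀ x, ∃ t s : F, pJ cc dd J t s = x * G x := by
  classical
  -- the line through the zero `(dᵢ, -cᵢ)` of `pᵢ` in a direction `(u, v)` with `pᵢ(u, v) = 1`
  have hn : cc i ^ 2 + dd i ^ 2 ≠ 0 := by
    rcases hi with h | h <;> positivity
  set u : ℚ := cc i / (cc i ^ 2 + dd i ^ 2)
  set v : ℚ := dd i / (cc i ^ 2 + dd i ^ 2)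
  have huv : cc i * u + dd i * v = 1 := by simp only [u, v]; field_simp
  set t : F → F := fun x => dd i + x * u
  set s : F → F := fun x => -cc i + x * v
  refine ⟨fun x => pJ cc dd (J.erase i) (t x) (s x), ?_, ?_, fun x => ⟨t x, s x, ?_⟩⟩
  · exact (continuous_finsetProd _ fun j _ => by fun_prop).continuousAt
  · refine Finset.prod_ne_zero_iff.2 fun j hj => ?_
    obtain ⟨hji, hjJ⟩ := Finset.mem_erase.1 hj
    have : (cc j : F) * t 0 + dd j * s 0 = ((cc j * dd i - cc i * dd j : ℚ) : F) := by
      simp only [t, s]; push_cast; ring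
    rw [this]
    exact_mod_cast hΔ j hjJ hji
  · have hlin : (cc i : F) * t x + dd i * s x = x := by
      have : ((cc i * u + dd i * v : ℚ) : F) = 1 := by exact_mod_cast huv
      push_cast at this
      linear_combination x * this
    rw [pJ, ← Finset.mul_prod_erase J _ hiJ, hlin]; rfl

theorem exists_ne_zero_sq_eq_neg_mul_pJ {I F : Type*} [NontriviallyNormedField F] [CharZero F]
    (hsq : ∀ᶠ c in 𝓝 (1 : F), IsSquare c) (cc dd : I → ℚ) {J : Finset I} {i : I} (hiJ : i ∈ J)
    (hi : cc i ≠ 0 ∨ dd i ≠ 0) (hΔ : ∀ j ∈ J, j ≠ i → cc j * dd i - cc i * dd j ≠ 0)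
    {d : ℚ} (hd : d ≠ 0) :
    ∃ t s r : F, r ≠ 0 ∧ r ^ 2 = -(d : F) * pJ cc dd J t s := by
  obtain ⟨G, hG, hG0, hpJ⟩ := exists_pJ_eq_mul (F := F) cc dd hiJ hi hΔ
  obtain ⟨x, r, hr, hrx⟩ := exists_ne_zero_sq_eq_mul_mul_apply hsq hG hG0 (c := -(d : F))
    (neg_ne_zero.2 (Rat.cast_ne_zero.2 hd))
  obtain ⟨t, s, hts⟩ := hpJ x
  exact ⟨t, s, r, hr, hts ▸ hrx⟩

/-- For every place `v` of `ℚ` (the real place and every `p`-adic place) there are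
`t, s ∈ ℚ_v` such that `−d·p_𝓘(t,s)` is a nonzero square in `ℚ_v`. -/
theorem stmt_15 {I : Type*} [Fintype I] [Nonempty I]
    (cc dd : I → ℚ) (hnz : ∀ i, cc i ≠ 0 ∨ dd i ≠ 0)
    (hΔ : ∀ i j : I, i ≠ j → cc j * dd i - cc i * dd j ≠ 0)
    (d : ℚ) (hd : d ≠ 0) :
    (∃ t s r : ℝ, r ≠ 0 ∧ r ^ 2 = -(d : ℝ) * pJ cc dd Finset.univ t s) ∧
      (∀ (p : ℕ) (hp : p.Prime), ∃ t s r : Qp p hp, r ≠ 0 ∧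
        r ^ 2 = -(d : Qp p hp) * pJ cc dd Finset.univ t s) := by
  obtain ⟨i⟩ := ‹Nonempty I›
  have hΔi : ∀ j ∈ Finset.univ, j ≠ i → cc j * dd i - cc i * dd j ≠ 0 :=
    fun j _ hji => hΔ i j hji.symm
  refine ⟨exists_ne_zero_sq_eq_neg_mul_pJ Real.eventually_isSquare_nhds_one cc dd
    (Finset.mem_univ i) (hnz i) hΔi hd, fun p hp => ?_⟩
  have : Fact p.Prime := ⟨hp⟩
  exact exists_ne_zero_sq_eq_neg_mul_pJ (F := ℚ_[p]) Padic.eventually_isSquare_nhds_one cc dd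
    (Finset.mem_univ i) (hnz i) hΔi hd
end
end
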